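/- If A is a Baer *-algebra and S ⊆ A is a self-adjoint subset (S* = S), then the commutant S' = {x ∈ A : xs = sx for all s ∈ S} is a Baer *-algebra in its own right: the right annihilator in S' of any nonempty subset of S' is generated by a projection lying in S'. -/

import Mathlib

/-!
Let `e` be the projection with `ann_A(T) = eA`. Each `s ∈ S` commutes with `T`, so left
multiplication by `s` preserves `ann_A(T)`; hence `e s e = s e`. Doing the same for `s⋆ ∈ S`
and taking adjoints gives `e s e = e s`, so `e` commutes with `S`. Then
`ann_{S'}(T) = ann_A(T) ∩ S' = e S'`, because `S'` is closed under multiplication.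
-/

section
variable {A : Type*} [Ring A] [Algebra ℂ A] [StarRing A]

def IsProjection (e : A) : Prop := star e = e ∧ e * e = e

def IsBaerStar (A : Type*) [Ring A] [Algebra ℂ A] [StarRing A] : Prop :=
  ∀ S : Set A, S.Nonempty → ∃ e : A, IsProjection e ∧
    {x : A | ∀ s ∈ S, s * x = 0} = {x : A | ∃ a : A, x = e * a}

def Commutant (S : Set A) : Set A := {x : A | ∀ s ∈ S, x * s = s * x}

end

section Annihilator

variable {R : Type*} [MonoidWithZero R] {T : Set R} {e : R}

theorem mem_rightAnnihilator_iff_mul_eq_self (he : IsIdempotentElem e)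
    (hann : {x : R | ∀ t ∈ T, t * x = 0} = {x : R | ∃ a : R, x = e * a}) (x : R) :
    (∀ t ∈ T, t * x = 0) ↔ e * x = x := by
  refine (Set.ext_iff.1 hann x).trans ⟨?_, fun h => ⟨x, h.symm⟩⟩
  rintro ⟨a, rfl⟩
  rw [← mul_assoc, he.eq]

theorem mul_mem_rightAnnihilator_of_commute {s x : R} (hs : ∀ t ∈ T, t * s = s * t)
    (hx : ∀ t ∈ T, t * x = 0) : ∀ t ∈ T, t * (s * x) = 0 := fun t ht => by
  rw [← mul_assoc, hs t ht, mul_assoc, hx t ht, mul_zero]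

theorem mul_mul_eq_of_commute_of_rightAnnihilator_eq (he : IsIdempotentElem e)
    (hann : {x : R | ∀ t ∈ T, t * x = 0} = {x : R | ∃ a : R, x = e * a}) {s : R}
    (hs : ∀ t ∈ T, t * s = s * t) : e * s * e = s * e := by
  have hmem := mem_rightAnnihilator_iff_mul_eq_self he hann
  rw [mul_assoc]
  exact (hmem _).1 <| mul_mem_rightAnnihilator_of_commute hs ((hmem e).2 he.eq)

end Annihilator

theorem mul_eq_mul_of_mul_mul_eq {R : Type*} [Semigroup R] [StarMul R] {e s : R}
    (he : star e = e) (hs : e * s * e = s * e) (hs' : e * star s * e = star s * e) :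
    e * s = s * e := by
  have h := congrArg star hs'
  rw [star_mul, star_mul, star_mul, star_star, he, ← mul_assoc] at h
  rw [← h, hs]

theorem commutant_eq_centralizer {A : Type*} [Ring A] [Algebra ℂ A] [StarRing A] (S : Set A) :
    Commutant S = Set.centralizer S := by
  ext x
  exact forall₂_congr fun _ _ => eq_comm

/-- the commutant of a self-adjoint subset of a Baer *-algebra is
itself a Baer *-algebra. -/
theorem commutant_of_selfadjoint_set_is_baer
    {A : Type*} [Ring A] [Algebra ℂ A] [StarRing A]
    (hA : IsBaerStar A) (S : Set A) (hSsa : (fun s => star s) '' S = S)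
    (T : Set A) (hT : T.Nonempty) (hTsub : T ⊆ Commutant S) :
    ∃ g : A, IsProjection g ∧ g ∈ Commutant S ∧
      {y : A | y ∈ Commutant S ∧ ∀ t ∈ T, t * y = 0} =
        {y : A | ∃ a ∈ Commutant S, y = g * a} := by
  obtain ⟨e, ⟨he_star, he_idem⟩, hann⟩ := hA T hT
  have hmem := mem_rightAnnihilator_iff_mul_eq_self he_idem hann
  have hese : ∀ s ∈ S, e * s * e = s * e := fun s hs =>
    mul_mul_eq_of_commute_of_rightAnnihilator_eq he_idem hann fun t ht => hTsub ht s hs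
  have he_comm : e ∈ Commutant S := fun s hs =>
    mul_eq_mul_of_mul_mul_eq he_star (hese s hs) (hese (star s) (hSsa ▸ ⟨s, hs, rfl⟩))
  refine ⟨e, ⟨he_star, he_idem⟩, he_comm, Set.ext fun y => ⟨?_, ?_⟩⟩
  · rintro ⟨hyS, hy⟩
    exact ⟨y, hyS, ((hmem y).1 hy).symm⟩
  · rintro ⟨a, haS, rfl⟩
    rw [commutant_eq_centralizer] at haS he_comm ⊢
    exact ⟨Set.mul_mem_centralizer he_comm haS, (hmem _).2 (by rw [← mul_assoc, he_idem])⟩
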